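/- Let m ≥ 2, let Q : (0,∞) → ℝ be a positive non-decreasing function with Q(t) = o(t²) as t → +∞ and liminf_{r→+∞} Q(r)·(log r)/r² < +∞. Let b : ℝ^m → ℝ be continuous with b(x) ≥ 1/Q(|x|) for |x| > 0, let Γ ∈ ℝ, and let f : ℝ → ℝ be continuous with f(t) > 0 for all t ≥ Γ. Let Ω ⊆ ℝ^m be an unbounded open set with non-empty boundary ∂Ω. Suppose u : closure(Ω) → ℝ is continuous and bounded, is C² on Ω, satisfies Δu(x) ≥ b(x) f(u(x)) for all x ∈ Ω, and u(x) ≤ Γ for all x ∈ ∂Ω. Then u(x) ≤ Γ for all x ∈ Ω. -/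

import Mathlib

/-!
Suppose `u x₀ > Γ` for some `x₀ ∈ Ω`; fix `θ ∈ (Γ, u x₀)` and an upper bound `C` of `u`. On
`Ω ∩ {u > θ}` we have `f u ≥ ε > 0`, and `b ≥ 1 / Q R` on the ball `B_R`, so there `Δu ≥ ε / Q R`.
As `Q R = o(R²)`, for large `R` this beats `Δ(c‖x‖²) = 2mc` with `c = (C - θ) / R²`. Hence
`u - c‖x‖²` has no interior maximum on `D = Ω ∩ {u > θ} ∩ B_R`, while it is `≤ θ` on `∂D`: on `∂Ω`
because `u ≤ Γ`, on the sphere because `cR² = C - θ`, elsewhere because `u = θ`. So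
`u x₀ ≤ θ + c‖x₀‖²`, and `R → ∞` gives `u x₀ ≤ θ`.
-/

open Filter Asymptotics

/-- The Laplacian on Euclidean space: the sum of the pure second partial derivatives. -/
noncomputable def euclideanLaplacian {m : ℕ} (u : EuclideanSpace ℝ (Fin m) → ℝ)
    (x : EuclideanSpace ℝ (Fin m)) : ℝ :=
  ∑ i, fderiv ℝ (fun y => fderiv ℝ u y (EuclideanSpace.single i 1)) x (EuclideanSpace.single i 1)

open Topology Set Metric

theorem IsLocalMax.deriv_deriv_nonpos {f : ℝ → ℝ} {x₀ : ℝ} (h : IsLocalMax f x₀)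
    (hc : ContinuousAt f x₀) : deriv (deriv f) x₀ ≤ 0 := by
  by_contra! hpos
  have hmin : IsLocalMin f x₀ := isLocalMin_of_deriv_deriv_pos hpos h.deriv_eq_zero hc
  have hconst : f =ᶠ[𝓝 x₀] fun _ => f x₀ :=
    (hmin.and h).mono fun _ hx => le_antisymm hx.2 hx.1
  have : deriv f =ᶠ[𝓝 x₀] fun _ => 0 := by simpa using hconst.deriv
  simp [this.deriv_eq] at hpos

theorem IsLocalMax.le_zero_of_hasDerivAt {f f' : ℝ → ℝ} {x₀ a : ℝ} (h : IsLocalMax f x₀)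
    (hf : ∀ᶠ x in 𝓝 x₀, HasDerivAt f (f' x) x) (hf' : HasDerivAt f' a x₀) : a ≤ 0 := by
  have hderiv : deriv f =ᶠ[𝓝 x₀] f' := hf.mono fun _ hx => hx.deriv
  simpa [hderiv.deriv_eq, hf'.deriv] using
    h.deriv_deriv_nonpos hf.self_of_nhds.continuousAt

theorem fderiv_fderiv_apply_le_of_isLocalMax_sub_sq {E : Type*} [NormedAddCommGroup E]
    [InnerProductSpace ℝ E] {u : E → ℝ} {x : E} {c : ℝ} (hu : ContDiffAt ℝ 2 u x)
    (hmax : IsLocalMax (fun y => u y - c * ‖y‖ ^ 2) x) (e : E) :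
    fderiv ℝ (fun y => fderiv ℝ u y e) x e ≤ 2 * c * ‖e‖ ^ 2 := by
  set L : ℝ → E := fun t => x + t • e
  have hL : ∀ t, HasDerivAt L e t := fun t => by
    have := ((hasDerivAt_id t).smul_const e).const_add x
    simp only [id, one_smul] at this
    exact this
  have hL0 : L 0 = x := by simp [L]
  have hLx : Tendsto L (𝓝 0) (𝓝 x) := hL0 ▸ (hL 0).continuousAt.tendsto
  have hψ : ∀ᶠ t in 𝓝 0, HasDerivAt (fun t => u (L t) - c * ‖L t‖ ^ 2)
      (fderiv ℝ u (L t) e - c * (2 * inner ℝ (L t) e)) t := by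
    filter_upwards [hLx.eventually (hu.eventually (by simp))] with t ht
    exact ((ht.differentiableAt two_ne_zero).hasFDerivAt.comp_hasDerivAt t (hL t)).sub
      (((hL t).norm_sq).const_mul c)
  have hψ' : HasDerivAt (fun t => fderiv ℝ u (L t) e - c * (2 * inner ℝ (L t) e))
      (fderiv ℝ (fun y => fderiv ℝ u y e) x e - c * (2 * inner ℝ e e)) 0 := by
    have hF : DifferentiableAt ℝ (fun y => fderiv ℝ u y e) (L 0) := hL0 ▸
      ((hu.fderiv_right le_rfl).differentiableAt one_ne_zero).clm_apply (differentiableAt_const e)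
    refine (hL0 ▸ hF.hasFDerivAt.comp_hasDerivAt 0 (hL 0)).sub ?_
    simpa using (((hL 0).inner ℝ (hasDerivAt_const 0 e)).const_mul 2).const_mul c
  rw [← hL0] at hmax
  have := (hmax.comp_continuous (hL 0).continuousAt).le_zero_of_hasDerivAt hψ hψ'
  rw [real_inner_self_eq_norm_sq] at this
  linarith

theorem euclideanLaplacian_le_of_isLocalMax_sub_sq {m : ℕ} {u : EuclideanSpace ℝ (Fin m) → ℝ}
    {x : EuclideanSpace ℝ (Fin m)} {c : ℝ} (hu : ContDiffAt ℝ 2 u x)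
    (hmax : IsLocalMax (fun y => u y - c * ‖y‖ ^ 2) x) :
    euclideanLaplacian u x ≤ 2 * m * c := by
  calc euclideanLaplacian u x ≤ ∑ _i : Fin m, 2 * c := by
        refine Finset.sum_le_sum fun i _ => ?_
        simpa using
          fderiv_fderiv_apply_le_of_isLocalMax_sub_sq hu hmax (EuclideanSpace.single i 1)
    _ = 2 * m * c := by simp; ring

theorem IsOpen.le_of_frontier_le_of_not_isLocalMax {E : Type*} [PseudoMetricSpace E] [ProperSpace E]
    {D : Set E} (hD : IsOpen D) (hDb : Bornology.IsBounded D) {w : E → ℝ}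
    (hw : ContinuousOn w (closure D)) (hloc : ∀ z ∈ D, ¬ IsLocalMax w z) {θ : ℝ}
    (hfr : ∀ z ∈ frontier D, w z ≤ θ) : ∀ x ∈ D, w x ≤ θ := by
  intro x hx
  obtain ⟨z, hzD, hzmax⟩ := hDb.isCompact_closure.exists_isMaxOn ⟨x, subset_closure hx⟩ hw
  have hz : z ∈ frontier D := by
    rw [hD.frontier_eq]
    exact ⟨hzD, fun hz =>
      hloc z hz (hzmax.isLocalMax (mem_of_superset (hD.mem_nhds hz) subset_closure))⟩
  exact (hzmax (subset_closure hx)).trans (hfr z hz)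

theorem sub_sq_le_of_lt_euclideanLaplacian {m : ℕ} {Ω : Set (EuclideanSpace ℝ (Fin m))}
    (hΩ : IsOpen Ω) {u : EuclideanSpace ℝ (Fin m) → ℝ} (hu : ContinuousOn u (closure Ω))
    (hu2 : ContDiffOn ℝ 2 u Ω) {C θ c R : ℝ} (huC : ∀ x ∈ closure Ω, u x ≤ C)
    (hbc : ∀ x ∈ frontier Ω, u x ≤ θ) (hc : 0 ≤ c) (hcR : C - θ ≤ c * R ^ 2)
    (hlap : ∀ x ∈ Ω, ‖x‖ < R → θ < u x → 2 * m * c < euclideanLaplacian u x) :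
    ∀ x ∈ Ω, ‖x‖ < R → u x - c * ‖x‖ ^ 2 ≤ θ := by
  intro x hxΩ hxR
  have hcx : 0 ≤ c * ‖x‖ ^ 2 := by positivity
  by_cases hux : u x ≤ θ
  · linarith
  set D := Ω ∩ u ⁻¹' Ioi θ ∩ ball 0 R
  have hDΩ : D ⊆ Ω := fun _ hz => hz.1.1
  have hDopen : IsOpen D :=
    ((hu.mono subset_closure).isOpen_inter_preimage hΩ isOpen_Ioi).inter isOpen_ball
  refine hDopen.le_of_frontier_le_of_not_isLocalMax (w := fun y => u y - c * ‖y‖ ^ 2)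
    (isBounded_ball.subset inter_subset_right) ((hu.mono (closure_mono hDΩ)).sub (by fun_prop))
    ?_ ?_ x ⟨⟨hxΩ, not_le.mp hux⟩, mem_ball_zero_iff.mpr hxR⟩
  · rintro z ⟨⟨hzΩ, hzθ⟩, hzR⟩ hmax
    have := euclideanLaplacian_le_of_isLocalMax_sub_sq (hu2.contDiffAt (hΩ.mem_nhds hzΩ)) hmax
    linarith [hlap z hzΩ (mem_ball_zero_iff.mp hzR) hzθ]
  · intro z hz
    have hcz : 0 ≤ c * ‖z‖ ^ 2 := by positivity
    rw [hDopen.frontier_eq] at hz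
    obtain ⟨hzD, hz_notD⟩ := hz
    by_cases huz : u z ≤ θ
    · linarith
    have hzΩ : z ∈ Ω := by
      by_contra hzΩ
      exact huz (hbc z (hΩ.frontier_eq ▸ ⟨closure_mono hDΩ hzD, hzΩ⟩))
    have hzR : ‖z‖ = R := by
      refine le_antisymm ?_ (not_lt.mp fun hzR =>
        hz_notD ⟨⟨hzΩ, not_le.mp huz⟩, mem_ball_zero_iff.mpr hzR⟩)
      simpa using closure_ball_subset_closedBall (closure_mono inter_subset_right hzD)
    rw [hzR]
    linarith [huC z (closure_mono hDΩ hzD)]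

theorem one_div_le_of_mem_ball {E : Type*} [NormedAddCommGroup E] [NormedSpace ℝ E]
    [Nontrivial E] {Q : ℝ → ℝ} (hQpos : ∀ t > (0:ℝ), 0 < Q t)
    (hQmono : ∀ s t : ℝ, 0 < s → s ≤ t → Q s ≤ Q t) {b : E → ℝ} (hb : Continuous b)
    (hbQ : ∀ x : E, 0 < ‖x‖ → 1 / Q ‖x‖ ≤ b x) {R : ℝ} {x : E} (hx : x ∈ ball 0 R) :
    1 / Q R ≤ b x := by
  have hoff : ∀ y ∈ ball (0 : E) R, y ≠ 0 → 1 / Q R ≤ b y := fun y hy hy0 => by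
    have hy0 : 0 < ‖y‖ := norm_pos_iff.mpr hy0
    exact (one_div_le_one_div_of_le (hQpos _ hy0)
      (hQmono _ _ hy0 (mem_ball_zero_iff.mp hy).le)).trans (hbQ y hy0)
  rcases eq_or_ne x 0 with rfl | hx0
  · refine ge_of_tendsto (hb.tendsto 0 |>.mono_left (nhdsWithin_le_nhds (s := {0}ᶜ))) ?_
    filter_upwards [nhdsWithin_le_nhds (isOpen_ball.mem_nhds hx), self_mem_nhdsWithin] with y hy hy0
    exact hoff y hy hy0
  · exact hoff x hx hx0

theorem Asymptotics.IsLittleO.eventually_const_mul_lt {Q : ℝ → ℝ}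
    (hQ : Q =o[atTop] fun t => t ^ 2) (K : ℝ) {ε : ℝ} (hε : 0 < ε) :
    ∀ᶠ R in atTop, K * Q R < ε * R ^ 2 := by
  filter_upwards [(hQ.const_mul_left K).def (half_pos hε), eventually_ne_atTop 0] with R hR hR0
  have : 0 < R ^ 2 := by positivity
  rw [Real.norm_eq_abs, Real.norm_eq_abs, abs_of_pos this] at hR
  linarith [le_abs_self (K * Q R), mul_lt_mul_of_pos_right (half_lt_self hε) this]

theorem le_of_eventually_sub_div_sq_le {a k θ : ℝ}
    (h : ∀ᶠ R in atTop, a - k / R ^ 2 ≤ θ) : a ≤ θ := by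
  have hlim : Tendsto (fun R : ℝ => a - k / R ^ 2) atTop (𝓝 a) := by
    simpa using tendsto_const_nhds.sub
      ((tendsto_const_nhds (x := k)).div_atTop (tendsto_pow_atTop two_ne_zero))
  exact le_of_tendsto hlim h

theorem stmt9_general {m : ℕ} (hm : 2 ≤ m)
    (Q : ℝ → ℝ)
    (hQpos : ∀ t > (0:ℝ), 0 < Q t)
    (hQmono : ∀ s t : ℝ, 0 < s → s ≤ t → Q s ≤ Q t)
    (hQo : Q =o[atTop] fun t => t ^ 2)
    (b : EuclideanSpace ℝ (Fin m) → ℝ) (hb : Continuous b)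
    (hbQ : ∀ x : EuclideanSpace ℝ (Fin m), 0 < ‖x‖ → 1 / Q ‖x‖ ≤ b x)
    (Γ : ℝ) (f : ℝ → ℝ) (hf : Continuous f) (hfpos : ∀ t ≥ Γ, 0 < f t)
    (Ω : Set (EuclideanSpace ℝ (Fin m))) (hΩopen : IsOpen Ω)
    (u : EuclideanSpace ℝ (Fin m) → ℝ)
    (hucont : ContinuousOn u (closure Ω))
    (hubdd : ∃ C : ℝ, ∀ x ∈ closure Ω, |u x| ≤ C)
    (huC2 : ContDiffOn ℝ 2 u Ω)
    (hineq : ∀ x ∈ Ω, b x * f (u x) ≤ euclideanLaplacian u x)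
    (hbc : ∀ x ∈ frontier Ω, u x ≤ Γ) :
    ∀ x ∈ Ω, u x ≤ Γ := by
  intro x₀ hx₀
  by_contra! hΓx₀
  obtain ⟨θ, hΓθ, hθx₀⟩ := exists_between hΓx₀
  obtain ⟨C, hC⟩ := hubdd
  have huC : ∀ x ∈ closure Ω, u x ≤ C := fun x hx => (le_abs_self _).trans (hC x hx)
  have hθC : θ < C := hθx₀.trans_le (huC x₀ (subset_closure hx₀))
  obtain ⟨ε, hε, hfε⟩ := isCompact_Icc.exists_forall_le' hf.continuousOn
    fun t ht => hfpos t (hΓθ.le.trans (ht : t ∈ Icc θ C).1)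
  -- so that the space is nontrivial, as `one_div_le_of_mem_ball` requires
  have : Nonempty (Fin m) := ⟨⟨0, by omega⟩⟩
  refine hθx₀.not_ge (le_of_eventually_sub_div_sq_le (k := (C - θ) * ‖x₀‖ ^ 2) ?_)
  filter_upwards [hQo.eventually_const_mul_lt (2 * m * (C - θ)) hε,
    eventually_gt_atTop ‖x₀‖] with R hQR hx₀R
  have hR : 0 < R := (norm_nonneg _).trans_lt hx₀R
  rw [mul_div_right_comm]
  refine sub_sq_le_of_lt_euclideanLaplacian hΩopen hucont huC2 huC
    (fun x hx => (hbc x hx).trans hΓθ.le) (by positivity)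
    (div_mul_cancel₀ _ (by positivity)).ge ?_ x₀ hx₀ hx₀R
  intro x hx hxR hθx
  have hbx := one_div_le_of_mem_ball hQpos hQmono hb hbQ (mem_ball_zero_iff.mpr hxR)
  calc 2 * m * ((C - θ) / R ^ 2) < 1 / Q R * ε := by
        rw [← mul_div_assoc, one_div_mul_eq_div, div_lt_div_iff₀ (by positivity) (hQpos R hR)]
        exact hQR
    _ ≤ b x * f (u x) :=
        mul_le_mul hbx (hfε _ ⟨hθx.le, huC x (subset_closure hx)⟩) hε.le
          ((one_div_pos.mpr (hQpos R hR)).le.trans hbx)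
    _ ≤ euclideanLaplacian u x := hineq x hx

theorem stmt9 {m : ℕ} (hm : 2 ≤ m)
    (Q : ℝ → ℝ)
    (hQpos : ∀ t > (0:ℝ), 0 < Q t)
    (hQmono : ∀ s t : ℝ, 0 < s → s ≤ t → Q s ≤ Q t)
    (hQo : Q =o[atTop] fun t => t ^ 2)
    (hliminf : ∃ C : ℝ, ∃ᶠ r in atTop, Q r * Real.log r / r ^ 2 ≤ C)
    (b : EuclideanSpace ℝ (Fin m) → ℝ) (hb : Continuous b)
    (hbQ : ∀ x : EuclideanSpace ℝ (Fin m), 0 < ‖x‖ → 1 / Q ‖x‖ ≤ b x)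
    (Γ : ℝ) (f : ℝ → ℝ) (hf : Continuous f) (hfpos : ∀ t ≥ Γ, 0 < f t)
    (Ω : Set (EuclideanSpace ℝ (Fin m))) (hΩopen : IsOpen Ω)
    (hΩunbounded : ¬ Bornology.IsBounded Ω)
    (hΩbdry : (frontier Ω).Nonempty)
    (u : EuclideanSpace ℝ (Fin m) → ℝ)
    (hucont : ContinuousOn u (closure Ω))
    (hubdd : ∃ C : ℝ, ∀ x ∈ closure Ω, |u x| ≤ C)
    (huC2 : ContDiffOn ℝ 2 u Ω)
    (hineq : ∀ x ∈ Ω, b x * f (u x) ≤ euclideanLaplacian u x)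
    (hbc : ∀ x ∈ frontier Ω, u x ≤ Γ) :
    ∀ x ∈ Ω, u x ≤ Γ :=
  stmt9_general hm Q hQpos hQmono hQo b hb hbQ Γ f hf hfpos Ω hΩopen u hucont hubdd huC2 hineq hbc
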